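/- Let n ≥ 2, J ⊆ [n-1], and let x be a J-block diagonal lower triangular matrix in SL_n(ℂ) with 1's on the diagonal. Then x ∈ U^-_{≥0} if and only if for every k ∈ {1,...,m}, the diagonal block x(J'_k), viewed as an n_k × n_k matrix, lies in the submonoid of SL_{n_k}(ℂ) generated by {I + a E_{p+1,p} : 1 ≤ p ≤ n_k − 1, a ∈ ℝ, a ≥ 0}. -/

import Mathlib

open Matrix

attribute [local instance] Classical.propDecidable

noncomputable section

namespace PetersonPaper

/-- Zero above the diagonal: `M i j = 0` whenever `i < j` (lower triangular). -/
def lowerTri (n : ℕ) (M : Matrix (Fin n) (Fin n) ℂ) : Prop :=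
  ∀ i j : Fin n, i < j → M i j = 0

/-- Zero below the diagonal: `M i j = 0` whenever `j < i` (upper triangular). -/
def upperTri (n : ℕ) (M : Matrix (Fin n) (Fin n) ℂ) : Prop :=
  ∀ i j : Fin n, j < i → M i j = 0

/-- The regular nilpotent matrix `f`, with `(i,j)` entry `1` iff `i = j+1`. -/
def fMat (n : ℕ) : Matrix (Fin n) (Fin n) ℂ :=
  fun i j => if (i : ℕ) = (j : ℕ) + 1 then 1 else 0

/-- `Δ_i(g)`: the lower-right `(n-i)×(n-i)` minor of `g`.  Here `i : Fin (n-1)`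
encodes the (1-based) index `i.1 + 1 ∈ {1,…,n-1}`. -/
def Delta (n : ℕ) (g : Matrix (Fin n) (Fin n) ℂ) (i : Fin (n-1)) : ℂ :=
  (g.submatrix
    (fun k : Fin (n - (i.1 + 1)) => (⟨k.1 + (i.1 + 1), by have := k.isLt; omega⟩ : Fin n))
    (fun k : Fin (n - (i.1 + 1)) => (⟨k.1 + (i.1 + 1), by have := k.isLt; omega⟩ : Fin n))).det

/-- `q_i(g) = -(g⁻¹ f g)_{i,i+1}` (1-based indices; `i : Fin (n-1)` encodes `i.1+1`). -/
def qfun (n : ℕ) (g : Matrix (Fin n) (Fin n) ℂ) (i : Fin (n-1)) : ℂ :=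
  -((g⁻¹ * fMat n * g) (⟨i.1, by have := i.isLt; omega⟩ : Fin n)
      (⟨i.1 + 1, by have := i.isLt; omega⟩ : Fin n))

/-- The (0-based) gap `c` (between positions `c` and `c+1` of `Fin n`) belongs to
`J ⊆ [n-1]`; `c` encodes the 1-based element `c+1` of `[n-1]`. -/
def gapMem (n : ℕ) (J : Set (Fin (n-1))) (c : ℕ) : Prop :=
  ∃ h : c < n - 1, (⟨c, h⟩ : Fin (n-1)) ∈ J

/-- The (0-based) first position of the block of the partition of `{0,…,n-1}`
determined by `J` containing the position `p`. -/
def blockStart (n : ℕ) (J : Set (Fin (n-1))) (p : Fin n) : ℕ :=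
  sInf {a : ℕ | a ≤ p.1 ∧ ∀ c : ℕ, a ≤ c → c < p.1 → gapMem n J c}

/-- The (0-based) last position of the block of the partition of `{0,…,n-1}`
determined by `J` containing the position `p`. -/
def blockEnd (n : ℕ) (J : Set (Fin (n-1))) (p : Fin n) : ℕ :=
  sSup {b : ℕ | b < n ∧ p.1 ≤ b ∧ ∀ c : ℕ, p.1 ≤ c → c < b → gapMem n J c}

lemma blockStart_le (n : ℕ) (J : Set (Fin (n-1))) (p : Fin n) : blockStart n J p ≤ p.1 :=
  Nat.sInf_le ⟨le_refl _, fun c hc1 hc2 => absurd (lt_of_le_of_lt hc1 hc2) (lt_irrefl _)⟩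

lemma blockEnd_mem (n : ℕ) (J : Set (Fin (n-1))) (p : Fin n) :
    blockEnd n J p ∈ {b : ℕ | b < n ∧ p.1 ≤ b ∧ ∀ c : ℕ, p.1 ≤ c → c < b → gapMem n J c} :=
  Nat.sSup_mem
    ⟨p.1, p.isLt, le_refl _, fun c hc1 hc2 => absurd (lt_of_le_of_lt hc1 hc2) (lt_irrefl _)⟩
    ⟨n, fun _ hb => le_of_lt hb.1⟩

lemma blockEnd_lt (n : ℕ) (J : Set (Fin (n-1))) (p : Fin n) : blockEnd n J p < n :=
  (blockEnd_mem n J p).1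

lemma le_blockEnd (n : ℕ) (J : Set (Fin (n-1))) (p : Fin n) : p.1 ≤ blockEnd n J p :=
  (blockEnd_mem n J p).2.1

/-- The representative `ẇ_J` of the longest element of the Young subgroup determined
by `J ⊆ [n-1]`: block diagonal, with the antidiagonal matrix with entries
`(-1)^(row - blockStart)` on each block of the partition determined by `J`. -/
def wJ (n : ℕ) (J : Set (Fin (n-1))) : Matrix (Fin n) (Fin n) ℂ :=
  fun p q =>
    if (p : ℕ) + (q : ℕ) = blockStart n J p + blockEnd n J p
    then (-1 : ℂ) ^ ((p : ℕ) - blockStart n J p) else 0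

/-- A `J`-Toeplitz matrix: block diagonal with respect to the partition determined by
`J`, each block being lower triangular Toeplitz with `1`'s on the diagonal. -/
def IsJToeplitz (n : ℕ) (J : Set (Fin (n-1))) (x : Matrix (Fin n) (Fin n) ℂ) : Prop :=
  ∃ c : ℕ → ℕ → ℂ, (∀ a, c a 0 = 1) ∧
    ∀ p q : Fin n, x p q =
      if blockStart n J p = blockStart n J q ∧ (q : ℕ) ≤ (p : ℕ)
      then c (blockStart n J p) ((p : ℕ) - (q : ℕ)) else 0

/-- `g ∈ B⁺ ẇ_K B⁻` (at the level of matrices of determinant 1). -/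
def inBruhatPlus (n : ℕ) (K : Set (Fin (n-1))) (g : Matrix (Fin n) (Fin n) ℂ) : Prop :=
  ∃ b₁ b₂ : Matrix (Fin n) (Fin n) ℂ,
    b₁.det = 1 ∧ b₂.det = 1 ∧ upperTri n b₁ ∧ lowerTri n b₂ ∧ g = b₁ * wJ n K * b₂

/-- `g ∈ B⁻ ẇ_J B⁻` (at the level of matrices of determinant 1). -/
def inBruhatMinus (n : ℕ) (J : Set (Fin (n-1))) (g : Matrix (Fin n) (Fin n) ℂ) : Prop :=
  ∃ b₁ b₂ : Matrix (Fin n) (Fin n) ℂ,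
    b₁.det = 1 ∧ b₂.det = 1 ∧ lowerTri n b₁ ∧ lowerTri n b₂ ∧ g = b₁ * wJ n J * b₂

/-- `x_i(a) = I + a E_{i,i+1}` (1-based indices; `i : Fin (m-1)` encodes `i.1+1`). -/
def xMat (m : ℕ) (i : Fin (m-1)) (a : ℝ) : Matrix (Fin m) (Fin m) ℂ :=
  1 + Matrix.single (⟨i.1, by have := i.isLt; omega⟩ : Fin m)
      (⟨i.1 + 1, by have := i.isLt; omega⟩ : Fin m) (a : ℂ)

/-- `y_i(a) = I + a E_{i+1,i}` (1-based indices; `i : Fin (m-1)` encodes `i.1+1`). -/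
def yMat (m : ℕ) (i : Fin (m-1)) (a : ℝ) : Matrix (Fin m) (Fin m) ℂ :=
  1 + Matrix.single (⟨i.1 + 1, by have := i.isLt; omega⟩ : Fin m)
      (⟨i.1, by have := i.isLt; omega⟩ : Fin m) (a : ℂ)

/-- The simple transposition `s_i = (i, i+1)` of `S_n` (1-based; `i : Fin (n-1)`
encodes `i.1+1`). -/
def simpleRefl (n : ℕ) (i : Fin (n-1)) : Equiv.Perm (Fin n) :=
  Equiv.swap (⟨i.1, by have := i.isLt; omega⟩ : Fin n)
    (⟨i.1 + 1, by have := i.isLt; omega⟩ : Fin n)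

/-- `U⁺_{>0}`: the set `{x_{i_1}(a_1) ⋯ x_{i_N}(a_N) : a_k > 0}` attached to a fixed
word `word = (i_1, …, i_N)`. -/
def UposSet (n : ℕ) (word : List (Fin (n-1))) : Set (Matrix (Fin n) (Fin n) ℂ) :=
  { M | ∃ a : Fin word.length → ℝ, (∀ k, 0 < a k) ∧
      M = (List.ofFn fun k : Fin word.length => xMat n (word.get k) (a k)).prod }

/-- `U⁻_{>0}`: the set `{y_{i_1}(a_1) ⋯ y_{i_N}(a_N) : a_k > 0}` attached to a fixed
word `word = (i_1, …, i_N)`. -/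
def UnegPosSet (n : ℕ) (word : List (Fin (n-1))) : Set (Matrix (Fin n) (Fin n) ℂ) :=
  { M | ∃ a : Fin word.length → ℝ, (∀ k, 0 < a k) ∧
      M = (List.ofFn fun k : Fin word.length => yMat n (word.get k) (a k)).prod }

/-- `U⁻_{≥0}`: the submonoid generated by the `y_i(a)` for `a ≥ 0`. -/
def UnegMonoid (m : ℕ) : Submonoid (Matrix (Fin m) (Fin m) ℂ) :=
  Submonoid.closure { M | ∃ (i : Fin (m-1)) (a : ℝ), 0 ≤ a ∧ M = yMat m i a }

/-- The longest permutation matrix `ẇ_0`, with `(p,q)` entry `(-1)^{p-1}` iff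
`p + q = n + 1` (1-based), i.e. `(-1)^p` iff `p + q = n - 1` (0-based). -/
def w0Mat (n : ℕ) : Matrix (Fin n) (Fin n) ℂ :=
  fun p q => if (p : ℕ) + (q : ℕ) = n - 1 then (-1 : ℂ) ^ (p : ℕ) else 0

end PetersonPaper

/-!
Every element of `U⁻_{≥0}` is lower triangular, and for lower triangular matrices taking the
diagonal block along an interval of indices is multiplicative, because every intermediate
index of a nonzero product term lies between the row and the column index. It sends each
generator `y_i(a)` to a generator or to `1`, so the blocks of `x ∈ U⁻_{≥0}` are nonnegative.
Conversely, a block diagonal `x` is the product of its diagonal blocks, each padded by the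
identity, and padding by the identity is a monoid homomorphism sending generators to
generators.
-/

namespace Matrix

variable {ι κ R : Type*} [Semiring R]

section ExtendBlock

variable [DecidableEq κ] (e : ι ↪ κ)

/-- The matrix acting as `A` on the coordinates in the range of `e` and as the identity on
the other coordinates. -/
def extendBlock (A : Matrix ι ι R) : Matrix κ κ R :=
  of fun p q => Function.extend (Prod.map e e) (fun ij => A ij.1 ij.2)
    (fun pq => (1 : Matrix κ κ R) pq.1 pq.2) (p, q)

@[simp]
theorem extendBlock_apply_apply (A : Matrix ι ι R) (i j : ι) :
    extendBlock e A (e i) (e j) = A i j := by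
  simp only [extendBlock, of_apply]
  exact (e.injective.prodMap e.injective).extend_apply _ _ (i, j)

theorem extendBlock_apply_of_notMem_range (A : Matrix ι ι R) {p q : κ}
    (h : p ∉ Set.range e ∨ q ∉ Set.range e) :
    extendBlock e A p q = (1 : Matrix κ κ R) p q := by
  simp only [extendBlock, of_apply]
  refine Function.extend_apply' _ _ _ ?_
  rintro ⟨⟨i, j⟩, hij⟩
  simp only [Prod.map, Prod.mk.injEq] at hij
  exact h.elim (· ⟨i, hij.1⟩) (· ⟨j, hij.2⟩)

theorem extendBlock_apply_eq_zero (A : Matrix ι ι R) (i : ι) {q : κ}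
    (hq : q ∉ Set.range e) : extendBlock e A (e i) q = 0 := by
  rw [extendBlock_apply_of_notMem_range e A (.inr hq), one_apply_ne fun h => hq ⟨i, h⟩]

theorem extendBlock_one [DecidableEq ι] : extendBlock e (1 : Matrix ι ι R) = 1 := by
  ext p q
  by_cases h : p ∈ Set.range e ∧ q ∈ Set.range e
  · obtain ⟨⟨i, rfl⟩, ⟨j, rfl⟩⟩ := h
    simp [one_apply]
  · exact extendBlock_apply_of_notMem_range e _ (not_and_or.mp h)

theorem extendBlock_mul [Fintype ι] [Fintype κ] (A B : Matrix ι ι R) :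
    extendBlock e (A * B) = extendBlock e A * extendBlock e B := by
  ext p q
  by_cases hp : p ∈ Set.range e
  · obtain ⟨i, rfl⟩ := hp
    have hrow : (extendBlock e A * extendBlock e B) (e i) q =
        ∑ k, A i k * extendBlock e B (e k) q := by
      refine (Fintype.sum_of_injective e e.injective _ _ (fun r hr => ?_) fun k => ?_).symm
      · dsimp only
        rw [extendBlock_apply_eq_zero e _ i hr, zero_mul]
      · dsimp only
        rw [extendBlock_apply_apply]
    rw [hrow]
    by_cases hq : q ∈ Set.range e
    · obtain ⟨j, rfl⟩ := hq
      simp [mul_apply]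
    · simp [extendBlock_apply_eq_zero e _ _ hq]
  · simp only [mul_apply, extendBlock_apply_of_notMem_range e _ (.inl hp)]
    rw [← mul_apply, one_mul, extendBlock_apply_of_notMem_range e _ (.inl hp)]

theorem extendBlock_one_add_single [DecidableEq ι] (i j : ι) (c : R) :
    extendBlock e (1 + single i j c) = 1 + single (e i) (e j) c := by
  ext p q
  by_cases h : p ∈ Set.range e ∧ q ∈ Set.range e
  · obtain ⟨⟨k, rfl⟩, ⟨l, rfl⟩⟩ := h
    simp [one_apply, single_apply]
  · rw [extendBlock_apply_of_notMem_range e _ (not_and_or.mp h), add_apply,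
      single_apply_of_ne, add_zero]
    rintro ⟨rfl, rfl⟩
    exact h ⟨⟨i, rfl⟩, ⟨j, rfl⟩⟩

end ExtendBlock

section RestrictBlock

variable [DecidableEq κ]

def restrictBlock (S : Set κ) (x : Matrix κ κ R) : Matrix κ κ R :=
  of fun p q => if p ∈ S ∧ q ∈ S then x p q else (1 : Matrix κ κ R) p q

theorem restrictBlock_univ (x : Matrix κ κ R) : restrictBlock Set.univ x = x := by
  ext p q
  simp [restrictBlock]

theorem restrictBlock_empty (x : Matrix κ κ R) : restrictBlock ∅ x = 1 := by
  ext p q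
  simp [restrictBlock]

theorem extendBlock_submatrix (e : ι ↪ κ) (x : Matrix κ κ R) :
    extendBlock e (x.submatrix e e) = restrictBlock (Set.range e) x := by
  ext p q
  by_cases h : p ∈ Set.range e ∧ q ∈ Set.range e
  · obtain ⟨⟨i, rfl⟩, ⟨j, rfl⟩⟩ := h
    simp [restrictBlock]
  · rw [extendBlock_apply_of_notMem_range e _ (not_and_or.mp h), restrictBlock, of_apply,
      if_neg h]

theorem restrictBlock_union [Fintype κ] {S T : Set κ} (hST : Disjoint S T) (x : Matrix κ κ R)
    (hx : ∀ p ∈ S, ∀ q ∈ T, x p q = 0 ∧ x q p = 0) :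
    restrictBlock (S ∪ T) x = restrictBlock S x * restrictBlock T x := by
  ext p q
  by_cases hpS : p ∈ S
  · have hpT : p ∉ T := hST.notMem_of_mem_left hpS
    by_cases hqT : q ∈ T
    · have hqS : q ∉ S := hST.notMem_of_mem_right hqT
      have hterm : ∀ r, restrictBlock S x p r * restrictBlock T x r q = 0 := fun r => by
        by_cases hrS : r ∈ S
        · have hrq : r ≠ q := fun h => hqS (h ▸ hrS)
          simp [restrictBlock, hST.notMem_of_mem_left hrS, one_apply_ne hrq]
        · have hpr : p ≠ r := fun h => hrS (h ▸ hpS)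
          simp [restrictBlock, hrS, one_apply_ne hpr]
      rw [mul_apply, Finset.sum_eq_zero fun r _ => hterm r]
      simp [restrictBlock, hpS, hqT, (hx p hpS q hqT).1]
    · have hcol : ∀ r, restrictBlock T x r q = (1 : Matrix κ κ R) r q := by
        simp [restrictBlock, hqT]
      simp only [mul_apply, hcol]
      rw [← mul_apply, mul_one]
      by_cases hqS : q ∈ S <;> simp [restrictBlock, hpS, hqS, hqT]
  · have hrow : ∀ r, restrictBlock S x p r = (1 : Matrix κ κ R) p r := by
      simp [restrictBlock, hpS]
    simp only [mul_apply, hrow]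
    rw [← mul_apply, one_mul]
    by_cases hpT : p ∈ T
    · by_cases hqS : q ∈ S
      · have hqT : q ∉ T := hST.notMem_of_mem_left hqS
        have hpq : p ≠ q := fun h => hqT (h ▸ hpT)
        simp [restrictBlock, hpS, hpT, hqS, hqT, (hx q hqS p hpT).2, one_apply_ne hpq]
      · simp [restrictBlock, hpS, hpT, hqS]
    · simp [restrictBlock, hpS, hpT]

/-- `x` is the product of its diagonal blocks along the fibres of `b`, each padded by the
identity. -/
theorem mem_of_restrictBlock_mem [Fintype κ] {β : Type*} (M : Submonoid (Matrix κ κ R))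
    (b : κ → β) {x : Matrix κ κ R} (hx : ∀ p q, b p ≠ b q → x p q = 0)
    (hM : ∀ c, restrictBlock (b ⁻¹' {c}) x ∈ M) : x ∈ M := by
  classical
  suffices h : ∀ C : Finset β, restrictBlock (b ⁻¹' C) x ∈ M by
    simpa [restrictBlock_univ] using h (Finset.univ.image b)
  intro C
  induction C using Finset.induction_on with
  | empty => simp [restrictBlock_empty, M.one_mem]
  | insert c C hc ih =>
    have hdisj : Disjoint (b ⁻¹' {c}) (b ⁻¹' C) :=
      Set.disjoint_left.mpr fun p hp hpC => hc (by simpa [show b p = c from hp] using hpC)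
    have hcross : ∀ p ∈ b ⁻¹' {c}, ∀ q ∈ b ⁻¹' (C : Set β),
        x p q = 0 ∧ x q p = 0 := by
      intro p hp q hq
      have hne : b p ≠ b q := fun h => hc (by rw [← show b p = c from hp, h]; exact hq)
      exact ⟨hx p q hne, hx q p hne.symm⟩
    rw [Finset.coe_insert, Set.insert_eq, Set.preimage_union,
      restrictBlock_union hdisj x hcross]
    exact M.mul_mem (hM c) ih

end RestrictBlock

theorem IsLowerTriangular.submatrix_mul [Fintype ι] [Fintype κ] [LinearOrder κ]
    {A B : Matrix κ κ R} (hA : A.IsLowerTriangular) (hB : B.IsLowerTriangular) (e : ι ↪ κ)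
    (he : (Set.range e).OrdConnected) :
    (A * B).submatrix e e = A.submatrix e e * B.submatrix e e := by
  ext k l
  refine (Fintype.sum_of_injective e e.injective _ _ (fun r hr => ?_) fun _ => rfl).symm
  dsimp only
  rcases lt_or_ge (e k) r with hkr | hrk
  · rw [hA (show OrderDual.toDual r < OrderDual.toDual (e k) from hkr), zero_mul]
  rcases lt_or_ge r (e l) with hrl | hlr
  · rw [hB (show OrderDual.toDual (e l) < OrderDual.toDual r from hrl), mul_zero]
  exact absurd (he.out ⟨l, rfl⟩ ⟨k, rfl⟩ ⟨hlr, hrk⟩) hr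

end Matrix

namespace PetersonPaper

open Matrix

theorem yMat_mem_unegMonoid {m : ℕ} (i : Fin (m - 1)) {a : ℝ} (ha : 0 ≤ a) :
    yMat m i a ∈ UnegMonoid m :=
  Submonoid.subset_closure ⟨i, a, ha, rfl⟩

theorem isLowerTriangular_of_mem_unegMonoid {m : ℕ} {x : Matrix (Fin m) (Fin m) ℂ}
    (hx : x ∈ UnegMonoid m) : x.IsLowerTriangular := by
  induction hx using Submonoid.closure_induction with
  | mem x hx =>
    obtain ⟨i, a, -, rfl⟩ := hx
    exact blockTriangular_one.add (blockTriangular_single' (Fin.le_def.mpr (by simp)) _)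
  | one => exact blockTriangular_one
  | mul x y _ _ hx hy => exact hx.mul hy

section Interval

variable {s m n : ℕ} (h : s + m ≤ n)

def intervalEmb : Fin m ↪ Fin n :=
  ⟨fun k => ⟨s + k, by omega⟩, fun k l hkl => Fin.ext (by simpa using congrArg Fin.val hkl)⟩

@[simp]
theorem val_intervalEmb (k : Fin m) : (intervalEmb h k : ℕ) = s + k :=
  rfl

theorem mem_range_intervalEmb {p : Fin n} :
    p ∈ Set.range (intervalEmb h) ↔ s ≤ p ∧ (p : ℕ) < s + m := by
  constructor
  · rintro ⟨k, rfl⟩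
    exact ⟨Nat.le_add_right _ _, Nat.add_lt_add_left k.isLt s⟩
  · rintro ⟨h₁, h₂⟩
    exact ⟨⟨p - s, by omega⟩, Fin.ext (by simp; omega)⟩

theorem ordConnected_range_intervalEmb : (Set.range (intervalEmb h)).OrdConnected := by
  refine ⟨fun p hp q hq r hr => ?_⟩
  rw [mem_range_intervalEmb] at hp hq ⊢
  have := Fin.le_def.mp hr.1
  have := Fin.le_def.mp hr.2
  omega

theorem extendBlock_yMat (i : Fin (m - 1)) (a : ℝ) :
    extendBlock (intervalEmb h) (yMat m i a) = yMat n ⟨s + i, by omega⟩ a := by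
  rw [yMat, extendBlock_one_add_single]
  rfl

theorem submatrix_yMat_mem_unegMonoid (i : Fin (n - 1)) {a : ℝ} (ha : 0 ≤ a) :
    (yMat n i a).submatrix (intervalEmb h) (intervalEmb h) ∈ UnegMonoid m := by
  by_cases hi : s ≤ i ∧ (i : ℕ) + 1 < s + m
  · convert yMat_mem_unegMonoid (m := m) ⟨i - s, by omega⟩ ha using 1
    ext k l
    simp [yMat, one_apply, single_apply, Fin.ext_iff]
    exact if_congr (by omega) rfl rfl
  · convert (UnegMonoid m).one_mem
    ext k l
    simp [yMat, one_apply, single_apply, Fin.ext_iff]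
    omega

theorem submatrix_intervalEmb_mem_unegMonoid {x : Matrix (Fin n) (Fin n) ℂ}
    (hx : x ∈ UnegMonoid n) :
    x.submatrix (intervalEmb h) (intervalEmb h) ∈ UnegMonoid m := by
  induction hx using Submonoid.closure_induction with
  | mem x hx =>
    obtain ⟨i, a, ha, rfl⟩ := hx
    exact submatrix_yMat_mem_unegMonoid h i ha
  | one => simp [submatrix_one_embedding, (UnegMonoid m).one_mem]
  | mul x y hx hy ihx ihy =>
    rw [(isLowerTriangular_of_mem_unegMonoid hx).submatrix_mul
      (isLowerTriangular_of_mem_unegMonoid hy) _ (ordConnected_range_intervalEmb h)]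
    exact mul_mem ihx ihy

theorem extendBlock_intervalEmb_mem_unegMonoid {A : Matrix (Fin m) (Fin m) ℂ}
    (hA : A ∈ UnegMonoid m) :
    extendBlock (intervalEmb h) A ∈ UnegMonoid n := by
  induction hA using Submonoid.closure_induction with
  | mem A hA =>
    obtain ⟨i, a, ha, rfl⟩ := hA
    rw [extendBlock_yMat]
    exact yMat_mem_unegMonoid _ ha
  | one => simp [extendBlock_one, (UnegMonoid n).one_mem]
  | mul A B _ _ hA hB =>
    rw [extendBlock_mul]
    exact mul_mem hA hB

end Interval

section Blocks

variable {n : ℕ} {J : Set (Fin (n - 1))} {p q : Fin n}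

theorem gapMem_of_blockStart_le {c : ℕ} (hc : blockStart n J p ≤ c) (hcp : c < p) :
    gapMem n J c :=
  (Nat.sInf_mem (s := {a : ℕ | a ≤ p.1 ∧ ∀ c : ℕ, a ≤ c → c < p.1 → gapMem n J c})
    ⟨p, le_rfl, fun _ h₁ h₂ => absurd (h₁.trans_lt h₂) (lt_irrefl _)⟩).2 c hc hcp

theorem gapMem_of_lt_blockEnd {c : ℕ} (hpc : p ≤ c) (hc : c < blockEnd n J p) : gapMem n J c :=
  (blockEnd_mem n J p).2.2 c hpc hc

theorem blockStart_le_of_gapMem {a : ℕ} (ha : a ≤ p)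
    (hgap : ∀ c, a ≤ c → c < p → gapMem n J c) : blockStart n J p ≤ a :=
  Nat.sInf_le ⟨ha, hgap⟩

theorem le_blockEnd_of_gapMem {b : ℕ} (hb : b < n) (hpb : p ≤ b)
    (hgap : ∀ c : ℕ, p ≤ c → c < b → gapMem n J c) : b ≤ blockEnd n J p :=
  le_csSup ⟨n, fun _ hb' => hb'.1.le⟩ ⟨hb, hpb, hgap⟩

theorem blockStart_eq_blockStart_iff :
    blockStart n J q = blockStart n J p ↔ blockStart n J p ≤ q ∧ q ≤ blockEnd n J p := by
  have hSp := blockStart_le n J p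
  have hSq := blockStart_le n J q
  have hEp := le_blockEnd n J p
  constructor
  · intro hstart
    refine ⟨hstart ▸ hSq, ?_⟩
    rcases le_total (q : ℕ) p with hqp | hpq'
    · exact hqp.trans hEp
    · exact le_blockEnd_of_gapMem q.isLt hpq' fun c hpc hcq =>
        gapMem_of_blockStart_le (by omega) hcq
  · rintro ⟨h₁, h₂⟩
    have hgap : ∀ c, blockStart n J p ≤ c → c < blockEnd n J p → gapMem n J c :=
      fun c h h' => if hcp : c < p then gapMem_of_blockStart_le h hcp
      else gapMem_of_lt_blockEnd (by omega) h'
    have hle : blockStart n J q ≤ blockStart n J p :=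
      blockStart_le_of_gapMem h₁ fun c hc hcq => hgap c hc (by omega)
    have hge : blockStart n J p ≤ blockStart n J q :=
      blockStart_le_of_gapMem (by omega) fun c hc hcp =>
        if hcq : c < q then gapMem_of_blockStart_le hc hcq else hgap c (by omega) (by omega)
    omega

theorem blockStart_add_le (n : ℕ) (J : Set (Fin (n - 1))) (p : Fin n) :
    blockStart n J p + (blockEnd n J p - blockStart n J p + 1) ≤ n := by
  have := blockStart_le n J p
  have := le_blockEnd n J p
  have := blockEnd_lt n J p
  omega

theorem preimage_blockStart_singleton :
    blockStart n J ⁻¹' {blockStart n J p} =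
      Set.range (intervalEmb (blockStart_add_le n J p)) := by
  ext q
  rw [Set.mem_preimage, Set.mem_singleton_iff, blockStart_eq_blockStart_iff,
    mem_range_intervalEmb]
  have := blockStart_le n J p
  have := le_blockEnd n J p
  omega

end Blocks

/-- Lemma: a `J`-block diagonal lower triangular `x ∈ SL_n(ℂ)` with `1`'s on the
diagonal lies in `U⁻_{≥0}` iff each of its diagonal blocks lies in the
corresponding nonnegative submonoid of `SL_{n_k}(ℂ)`. -/
theorem block_diagonal_nonneg_iff (n : ℕ) (J : Set (Fin (n-1)))
    (x : Matrix (Fin n) (Fin n) ℂ)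
    (hblk : ∀ p q : Fin n, blockStart n J p ≠ blockStart n J q → x p q = 0) :
    x ∈ UnegMonoid n ↔
      ∀ p : Fin n,
        (x.submatrix
          (fun k : Fin (blockEnd n J p - blockStart n J p + 1) =>
            (⟨blockStart n J p + k.1, by
              have h0 := k.isLt
              have h1 := blockStart_le n J p
              have h2 := le_blockEnd n J p
              have h3 := blockEnd_lt n J p
              omega⟩ : Fin n))
          (fun k : Fin (blockEnd n J p - blockStart n J p + 1) =>
            (⟨blockStart n J p + k.1, by
              have h0 := k.isLt
              have h1 := blockStart_le n J p
              have h2 := le_blockEnd n J p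
              have h3 := blockEnd_lt n J p
              omega⟩ : Fin n)))
          ∈ UnegMonoid (blockEnd n J p - blockStart n J p + 1) := by
  constructor
  · exact fun hx p => submatrix_intervalEmb_mem_unegMonoid (blockStart_add_le n J p) hx
  · refine fun hblocks => mem_of_restrictBlock_mem _ (blockStart n J) hblk fun c => ?_
    by_cases hc : ∃ p, blockStart n J p = c
    · obtain ⟨p, rfl⟩ := hc
      rw [preimage_blockStart_singleton, ← extendBlock_submatrix]
      exact extendBlock_intervalEmb_mem_unegMonoid _ (hblocks p)
    · rw [Set.preimage_singleton_eq_empty.mpr (by simpa using hc), restrictBlock_empty]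
      exact one_mem _

end PetersonPaper
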